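/- For R > 0, μ > 0, n ≥ 2, and every X ∈ [0,∞)², the lower bound ν_n X₁^n + (X₁ + X₂)^n ≤ Φ_n(X) holds, where ν_n := exp{(n-1)[(1 + Rmax{1,μ}) ln(1 + 1/(Rmax{1,μ})) − 1]} − 1 > 0. -/

import Mathlib

open Matrix Finset

/-- `α_{k,n} = R (k + μ (n - k - 1))`. -/
noncomputable def alph (R mu : ℝ) (n k : ℕ) : ℝ := R * ((k : ℝ) + mu * ((n : ℝ) - (k : ℝ) - 1))

/-- `a_{j,n}`. -/
noncomputable def coefa (R mu : ℝ) (n j : ℕ) : ℝ :=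
  (n.choose j : ℝ) * ∏ k ∈ Finset.range j, ((k : ℝ) + alph R mu n k) / alph R mu n k

/-- `Φ_n(X) = Σ_{j=0}^n a_{j,n} X₁^j X₂^{n-j}`. -/
noncomputable def Phi (R mu : ℝ) (n : ℕ) (X : ℝ × ℝ) : ℝ :=
  ∑ j ∈ Finset.range (n + 1), coefa R mu n j * X.1 ^ j * X.2 ^ (n - j)

/-- first partial derivative of `Φ_n` in the first variable. -/
noncomputable def d1Phi (R mu : ℝ) (n : ℕ) (X : ℝ × ℝ) : ℝ :=
  deriv (fun t => Phi R mu n (t, X.2)) X.1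

/-- first partial derivative of `Φ_n` in the second variable. -/
noncomputable def d2Phi (R mu : ℝ) (n : ℕ) (X : ℝ × ℝ) : ℝ :=
  deriv (fun t => Phi R mu n (X.1, t)) X.2

/-- `∂₁²Φ_n`. -/
noncomputable def d11Phi (R mu : ℝ) (n : ℕ) (X : ℝ × ℝ) : ℝ :=
  deriv (fun t => d1Phi R mu n (t, X.2)) X.1

/-- `∂₁∂₂Φ_n`. -/
noncomputable def d12Phi (R mu : ℝ) (n : ℕ) (X : ℝ × ℝ) : ℝ :=
  deriv (fun t => d2Phi R mu n (t, X.2)) X.1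

/-- `∂₂²Φ_n`. -/
noncomputable def d22Phi (R mu : ℝ) (n : ℕ) (X : ℝ × ℝ) : ℝ :=
  deriv (fun t => d2Phi R mu n (X.1, t)) X.2

/-- The Hessian matrix `D²Φ_n(X)`. -/
noncomputable def hessPhi (R mu : ℝ) (n : ℕ) (X : ℝ × ℝ) : Matrix (Fin 2) (Fin 2) ℝ :=
  !![d11Phi R mu n X, d12Phi R mu n X; d12Phi R mu n X, d22Phi R mu n X]

/-- The mobility matrix `M(X)`. -/
noncomputable def mobM (R mu : ℝ) (X : ℝ × ℝ) : Matrix (Fin 2) (Fin 2) ℝ :=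
  !![(1 + R) * X.1, R * X.1; mu * R * X.2, mu * R * X.2]

/-- The quantity `A_{j,k}`. -/
noncomputable def Acoef (R mu : ℝ) (n j k : ℕ) : ℝ :=
  ((j : ℝ) + 2) * ((n : ℝ) - (k : ℝ)) * coefa R mu n (j + 2) * coefa R mu n k
    - ((n : ℝ) - (j : ℝ) - 1) * ((k : ℝ) + 1) * coefa R mu n (j + 1) * coefa R mu n (k + 1)

/-- `ν_n`. -/
noncomputable def nuc (R mu : ℝ) (n : ℕ) : ℝ :=
  Real.exp (((n : ℝ) - 1) * ((1 + R * max 1 mu) * Real.log (1 + 1 / (R * max 1 mu)) - 1)) - 1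

/-!
The binomial coefficients of `(X₁ + X₂)ⁿ` are dominated by the `a_{j,n}` because every factor
`(k + α_{k,n}) / α_{k,n}` is at least `1`. For the top coefficient, `α_{k,n} ≤ c (n - 1)` with
`c = R max{1, μ}`, so `a_{n,n} ≥ ∏_{k < n} (1 + k / (c (n - 1)))`. The logarithm of this product is a
right Riemann sum of the increasing function `s ↦ log (1 + s / (c (n - 1)))` on `[0, n - 1]`, hence
at least its integral `(n - 1) ((1 + c) log (1 + 1/c) - 1)`; exponentiating gives `a_{n,n} ≥ 1 + ν_n`.
-/

open Real

/-- The antiderivative of `s ↦ log (1 + s / d)` vanishing at `0`. -/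
noncomputable def logOneAddDivIntegral (d t : ℝ) : ℝ := (d + t) * log (1 + t / d) - t

lemma logOneAddDivIntegral_sub_le {d x y : ℝ} (hd : d ≠ 0) (hx : 0 < d + x) (hxy : x ≤ y) :
    logOneAddDivIntegral d y - logOneAddDivIntegral d x ≤ (y - x) * log (1 + y / d) := by
  have hy : 0 < d + y := by linarith
  have hratio : (d + x) * log ((d + y) / (d + x)) ≤ y - x := by
    have h := log_le_sub_one_of_pos (div_pos hy hx)
    have hmul : (d + x) * ((d + y) / (d + x) - 1) = y - x := by field_simp; ring
    nlinarith
  have hsplit : log (1 + y / d) = log (1 + x / d) + log ((d + y) / (d + x)) := by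
    have hxd : 1 + x / d = (d + x) / d := by field_simp
    rw [← log_mul (by rw [hxd]; exact div_ne_zero hx.ne' hd) (div_ne_zero hy.ne' hx.ne'), hxd]
    congr 1
    field_simp
  have hexpand : logOneAddDivIntegral d y - logOneAddDivIntegral d x
      = (y - x) * log (1 + y / d) + ((d + x) * log ((d + y) / (d + x)) - (y - x)) := by
    unfold logOneAddDivIntegral
    rw [hsplit]
    ring
  linarith

lemma exp_logOneAddDivIntegral_le_prod {d : ℝ} (hd : 0 < d) (m : ℕ) :
    exp (logOneAddDivIntegral d m) ≤ ∏ k ∈ range (m + 1), (1 + k / d) := by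
  induction m with
  | zero => simp [logOneAddDivIntegral]
  | succ m ih =>
    have hstep := logOneAddDivIntegral_sub_le hd.ne' (by positivity : 0 < d + m)
      (by linarith : (m : ℝ) ≤ m + 1)
    have hfactor : exp (logOneAddDivIntegral d (m + 1) - logOneAddDivIntegral d m)
        ≤ 1 + ((m + 1 : ℕ) : ℝ) / d := by
      rw [← exp_log (by positivity : 0 < 1 + ((m + 1 : ℕ) : ℝ) / d)]
      refine exp_le_exp.mpr (hstep.trans_eq ?_)
      push_cast
      ring
    rw [prod_range_succ]
    calc exp (logOneAddDivIntegral d (m + 1 : ℕ))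
        = exp (logOneAddDivIntegral d m)
          * exp (logOneAddDivIntegral d (m + 1) - logOneAddDivIntegral d m) := by
          rw [← exp_add]
          push_cast
          ring_nf
      _ ≤ _ := mul_le_mul ih hfactor (exp_pos _).le (prod_nonneg fun k _ => by positivity)

lemma logOneAddDivIntegral_mul_self {c t : ℝ} (hc : c ≠ 0) (ht : t ≠ 0) :
    logOneAddDivIntegral (c * t) t = t * ((1 + c) * log (1 + 1 / c) - 1) := by
  unfold logOneAddDivIntegral
  rw [show t / (c * t) = 1 / c by field_simp]
  ring

lemma one_lt_one_add_mul_log_one_add_inv {c : ℝ} (hc : 0 < c) :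
    1 < (1 + c) * log (1 + 1 / c) := by
  have hlog := lt_log_one_add_of_pos (one_div_pos.mpr hc)
  have hrational : 1 < (1 + c) * (2 * (1 / c) / (1 / c + 2)) := by
    rw [show (1 + c) * (2 * (1 / c) / (1 / c + 2)) = (2 + 2 * c) / (1 + 2 * c) by
      field_simp, one_lt_div (by positivity)]
    linarith
  nlinarith

lemma alph_pos {R mu : ℝ} {n k : ℕ} (hR : 0 < R) (hmu : 0 < mu) (hn : 2 ≤ n) (hk : k < n) :
    0 < alph R mu n k := by
  have hkn : (k : ℝ) + 1 ≤ n := by exact_mod_cast hk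
  refine mul_pos hR ?_
  rcases Nat.eq_zero_or_pos k with rfl | hk0
  · have hn' : (2 : ℝ) ≤ n := by exact_mod_cast hn
    simpa using mul_pos hmu (by linarith : (0 : ℝ) < n - 1)
  · have hk1 : (1 : ℝ) ≤ k := by exact_mod_cast hk0
    nlinarith

lemma alph_le {R mu : ℝ} {n k : ℕ} (hR : 0 ≤ R) (hk : k < n) :
    alph R mu n k ≤ R * max 1 mu * (n - 1) := by
  have hkn : (k : ℝ) + 1 ≤ n := by exact_mod_cast hk
  have hk_le : (k : ℝ) ≤ max 1 mu * k := le_mul_of_one_le_left k.cast_nonneg (le_max_left 1 mu)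
  have hrest : mu * (n - k - 1) ≤ max 1 mu * (n - k - 1) :=
    mul_le_mul_of_nonneg_right (le_max_right 1 mu) (by linarith)
  rw [alph, mul_assoc]
  exact mul_le_mul_of_nonneg_left (by linarith) hR

lemma choose_le_coefa {R mu : ℝ} {n j : ℕ} (hR : 0 < R) (hmu : 0 < mu) (hn : 2 ≤ n)
    (hj : j ≤ n) : (n.choose j : ℝ) ≤ coefa R mu n j := by
  refine le_mul_of_one_le_right (Nat.cast_nonneg _) (one_le_prod fun k hk => ?_)
  have hα := alph_pos hR hmu hn ((mem_range.mp hk).trans_le hj)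
  rw [one_le_div hα]
  linarith [k.cast_nonneg (α := ℝ)]

lemma prod_one_add_div_le_coefa_self {R mu : ℝ} {n : ℕ} (hR : 0 < R) (hmu : 0 < mu)
    (hn : 2 ≤ n) :
    ∏ k ∈ range n, (1 + k / (R * max 1 mu * (n - 1))) ≤ coefa R mu n n := by
  have hn' : (0 : ℝ) ≤ n - 1 := by
    have : (1 : ℝ) ≤ n := by exact_mod_cast (by omega : 1 ≤ n)
    linarith
  have hc : 0 ≤ R * max 1 mu * (n - 1) :=
    mul_nonneg (mul_nonneg hR.le (zero_le_one.trans (le_max_left 1 mu))) hn'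
  rw [coefa, Nat.choose_self, Nat.cast_one, one_mul]
  refine prod_le_prod (fun k _ => by positivity) fun k hk => ?_
  have hα := alph_pos hR hmu hn (mem_range.mp hk)
  rw [add_div, div_self hα.ne', add_comm]
  gcongr
  exact alph_le hR.le (mem_range.mp hk)

lemma one_add_nuc_le_coefa_self {R mu : ℝ} {n : ℕ} (hR : 0 < R) (hmu : 0 < mu) (hn : 2 ≤ n) :
    1 + nuc R mu n ≤ coefa R mu n n := by
  obtain ⟨m, rfl⟩ : ∃ m, n = m + 1 := ⟨n - 1, by omega⟩
  have hc : 0 < R * max 1 mu := mul_pos hR (one_pos.trans_le (le_max_left 1 mu))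
  have hm : (m : ℝ) ≠ 0 := by norm_cast; omega
  have hsum := exp_logOneAddDivIntegral_le_prod (mul_pos hc (by positivity : (0 : ℝ) < m)) m
  rw [logOneAddDivIntegral_mul_self hc.ne' hm] at hsum
  have hcoefa := prod_one_add_div_le_coefa_self hR hmu hn
  rw [nuc]
  push_cast at hcoefa ⊢
  simp only [add_sub_cancel_right] at hcoefa ⊢
  linarith

lemma nuc_pos {R mu : ℝ} {n : ℕ} (hR : 0 < R) (hn : 2 ≤ n) : 0 < nuc R mu n := by
  have hc : 0 < R * max 1 mu := mul_pos hR (one_pos.trans_le (le_max_left 1 mu))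
  have hn' : (0 : ℝ) < n - 1 := by
    have : (2 : ℝ) ≤ n := by exact_mod_cast hn
    linarith
  rw [nuc, sub_pos, one_lt_exp_iff]
  exact mul_pos hn' (sub_pos.mpr (one_lt_one_add_mul_log_one_add_inv hc))

theorem stmt14 (R mu : ℝ) (hR : 0 < R) (hmu : 0 < mu) (n : ℕ) (hn : 2 ≤ n)
    (X : ℝ × ℝ) (hX1 : 0 ≤ X.1) (hX2 : 0 ≤ X.2) :
    nuc R mu n * X.1 ^ n + (X.1 + X.2) ^ n ≤ Phi R mu n X ∧ 0 < nuc R mu n := by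
  refine ⟨?_, nuc_pos hR hn⟩
  have hlow : ∑ j ∈ range n, X.1 ^ j * X.2 ^ (n - j) * (n.choose j : ℝ)
      ≤ ∑ j ∈ range n, coefa R mu n j * X.1 ^ j * X.2 ^ (n - j) :=
    sum_le_sum fun j hj => by
      rw [mul_comm, mul_assoc]
      exact mul_le_mul_of_nonneg_right (choose_le_coefa hR hmu hn (mem_range.mp hj).le)
        (by positivity)
  have htop := mul_le_mul_of_nonneg_right (one_add_nuc_le_coefa_self hR hmu hn) (pow_nonneg hX1 n)
  rw [add_pow, Phi, sum_range_succ, sum_range_succ]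
  simp only [Nat.sub_self, pow_zero, mul_one, Nat.choose_self, Nat.cast_one]
  linarith
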